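/- arXiv:2210.00244 — 3 statements merged into one kernel-verified Lean document; each statement's English description precedes it below -/
import Mathlib

section
/- For the Laplacian kernel K(x) = e^{−|x|} on ℝ, for every x ≠ 0 the quantity s_K(x) := (1 + K(2x) − 2K(x)²)/(2(1 − K(x))²) equals (1 + e^{−|x|})/(2(1 − e^{−|x|})), and consequently s_K(x) ≥ 1/(2|x|) for every x ≠ 0. -/
/-! For `K(x) = e^{-|x|}` we have `K(2x) = K(x)²`, so the numerator of `s_K(x)` factors as
`(1 + K x)(1 - K x)` and cancels against the denominator. The lower bound then follows from
`1 - e^{-t} ≤ t` and `1 + e^{-t} ≥ 1`. -/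

noncomputable section

/-- The quantity `s_K(x)` for a kernel `K : ℝ → ℝ`. -/
def sK (K : ℝ → ℝ) (x : ℝ) : ℝ :=
  (1 + K (2 * x) - 2 * (K x)^2) / (2 * (1 - K x)^2)

open Real

theorem sK_eq_of_map_two_mul_eq_sq {K : ℝ → ℝ} {x : ℝ} (h2 : K (2 * x) = K x ^ 2)
    (h1 : K x ≠ 1) : sK K x = (1 + K x) / (2 * (1 - K x)) := by
  have h1' : 1 - K x ≠ 0 := sub_ne_zero.mpr h1.symm
  rw [sK, h2]
  field_simp
  ring

theorem exp_neg_abs_two_mul (x : ℝ) : exp (-|2 * x|) = exp (-|x|) ^ 2 := by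
  rw [abs_mul, abs_two, ← exp_nat_mul]
  ring_nf

theorem one_div_two_mul_le_one_add_exp_neg_div {t : ℝ} (ht : 0 < t) :
    1 / (2 * t) ≤ (1 + exp (-t)) / (2 * (1 - exp (-t))) := by
  have hgap : 0 < 1 - exp (-t) := sub_pos.mpr (exp_lt_one_iff.mpr (neg_neg_of_pos ht))
  have hgap_le : 1 - exp (-t) ≤ t := by linarith [one_sub_le_exp_neg t]
  calc 1 / (2 * t) ≤ 1 / (2 * (1 - exp (-t))) := by gcongr
    _ ≤ (1 + exp (-t)) / (2 * (1 - exp (-t))) := by gcongr; linarith [exp_pos (-t)]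

/-- for the Laplacian kernel `K(x) = e^{-|x|}` on ℝ and `x ≠ 0`,
`s_K(x) = (1 + e^{-|x|})/(2(1 - e^{-|x|}))`, and consequently `s_K(x) ≥ 1/(2|x|)`. -/
theorem sK_laplacian (x : ℝ) (hx : x ≠ 0) :
    sK (fun t => Real.exp (-|t|)) x
        = (1 + Real.exp (-|x|)) / (2 * (1 - Real.exp (-|x|))) ∧
      sK (fun t => Real.exp (-|t|)) x ≥ 1 / (2 * |x|) := by
  have habs : 0 < |x| := abs_pos.mpr hx
  have hK : exp (-|x|) ≠ 1 := (exp_lt_one_iff.mpr (neg_neg_of_pos habs)).ne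
  have heq := sK_eq_of_map_two_mul_eq_sq (K := fun t => exp (-|t|)) (exp_neg_abs_two_mul x) hK
  exact ⟨heq, heq ▸ one_div_two_mul_le_one_add_exp_neg_div habs⟩
end
end

section
/- Let K : ℝ^d → ℝ be a shift-invariant kernel with K(0) = 1 admitting a Bochner representation with density p, and suppose K is real-analytic on {x : ‖x‖₁ < r} for some r > 0. Let ω have density p and define X(x) := cos⟨ω, x⟩ − K(x). Then for every integer k ≥ 0 there exist constants C, η > 0 such that |E[X(x)^k]| ≤ C · ‖x‖₁^{2k} for all x with ‖x‖₁ ≤ η; that is, E[X(x)^k] vanishes to order at least 2k at the origin. -/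
open MeasureTheory

noncomputable section

/-- The ℓ₁ norm on `ℝ^d`. -/
def l1 {d : ℕ} (x : EuclideanSpace ℝ (Fin d)) : ℝ := ∑ i, |x i|

/-!
Write `X(x) = (cos⟨ω, x⟩ - 1) - (K x - 1)` with `K x - 1 = E[cos⟨ω, x⟩ - 1]`. Expanding the
`k`-th power binomially, it suffices that `E[(cos⟨ω, x⟩ - 1)^j] = O(‖x‖^{2j})` for `j ≤ k`.
Since `2 (cos θ - 1)` is the second central difference of `t ↦ cos (t θ)` at `0`, the Bochner
representation turns `2^j E[(cos⟨ω, x⟩ - 1)^j]` into the `2j`-th forward difference with step `1`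
of `t ↦ K (t • x)`, started at `-j`. By the mean value theorem this is at most `‖x‖^{2j}` times a
bound for the `2j`-th derivative of `K` near `0`, and `K` is smooth there since it is analytic.
-/

open Set Finset fwdDiff

theorem fwdDiff_iter_integral {M Ω G : Type*} [AddCommMonoid M] [MeasurableSpace Ω]
    [NormedAddCommGroup G] [NormedSpace ℝ G] {μ : Measure Ω} {f : M → Ω → G}
    (hf : ∀ t, Integrable (f t) μ) (h : M) (n : ℕ) (a : M) :
    Δ_[h] ^[n] (fun t => ∫ ω, f t ω ∂μ) a = ∫ ω, Δ_[h] ^[n] (fun t => f t ω) a ∂μ := by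
  induction n generalizing f with
  | zero => rfl
  | succ n ih =>
    have hΔ : Δ_[h] (fun t => ∫ ω, f t ω ∂μ) = fun t => ∫ ω, Δ_[h] (fun t => f t ω) t ∂μ :=
      funext fun t => (integral_sub (hf (t + h)) (hf t)).symm
    rw [Function.iterate_succ_apply, hΔ]
    exact ih fun t => (hf (t + h)).sub (hf t)

theorem abs_fwdDiff_iter_le_of_hasDerivAt {n : ℕ} {F : ℕ → ℝ → ℝ} {a M : ℝ}
    (hF : ∀ m < n, ∀ t ∈ Icc a (a + n), HasDerivAt (F m) (F (m + 1) t) t)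
    (hM : ∀ t ∈ Icc a (a + n), |F n t| ≤ M) :
    |Δ_[1] ^[n] (F 0) a| ≤ M := by
  induction n generalizing F a with
  | zero => simpa using hM a (by simp)
  | succ n ih =>
    have hIcc : ∀ t ∈ Icc a (a + n), Icc t (t + 1) ⊆ Icc a (a + (n + 1 : ℕ)) := by
      intro t ht
      exact Icc_subset_Icc ht.1 (by push_cast; linarith [ht.2])
    rw [Function.iterate_succ_apply]
    refine ih (F := fun m => Δ_[1] (F m)) (fun m hm t ht => ?_) (fun t ht => ?_)
    · have hshift := (hF m (by omega) (t + 1) (hIcc t ht ⟨by linarith, le_rfl⟩)).comp_add_const t 1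
      exact hshift.sub (hF m (by omega) t (hIcc t ht ⟨le_rfl, by linarith⟩))
    · have hderiv : ∀ s ∈ Icc t (t + 1), HasDerivAt (F n) (F (n + 1) s) s :=
        fun s hs => hF n (by omega) s (hIcc t ht hs)
      obtain ⟨c, hc, hslope⟩ := exists_hasDerivAt_eq_slope (F n) (F (n + 1)) (lt_add_one t)
        (fun s hs => (hderiv s hs).continuousAt.continuousWithinAt)
        (fun s hs => hderiv s (Ioo_subset_Icc_self hs))
      rw [add_sub_cancel_left, div_one] at hslope
      rw [fwdDiff, ← hslope]
      exact hM c (hIcc t ht (Ioo_subset_Icc_self hc))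

theorem fwdDiff_iter_two_mul_cos_mul_add (θ φ u : ℝ) (j : ℕ) :
    Δ_[1] ^[2 * j] (fun t => Real.cos (t * θ + φ)) u
      = (2 * Real.cos θ - 2) ^ j * Real.cos ((u + j) * θ + φ) := by
  induction j generalizing φ with
  | zero => simp
  | succ j ih =>
    have hΔ2 : Δ_[1] ^[2] (fun t => Real.cos (t * θ + φ))
        = (2 * Real.cos θ - 2) • fun t => Real.cos (t * θ + (θ + φ)) := by
      funext t
      have hplus := Real.cos_add ((t + 1) * θ + φ) θ
      have hminus := Real.cos_sub ((t + 1) * θ + φ) θ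
      simp only [Function.iterate_succ_apply, Function.iterate_zero_apply, fwdDiff,
        Pi.smul_apply, smul_eq_mul]
      ring_nf at hplus hminus ⊢
      linarith
    rw [mul_add, mul_one, Function.iterate_add_apply, hΔ2, fwdDiff_iter_const_smul,
      Pi.smul_apply, ih, smul_eq_mul]
    push_cast
    ring_nf

theorem fwdDiff_iter_cos_mul (θ : ℝ) (j : ℕ) :
    Δ_[1] ^[2 * j] (fun t => Real.cos (t * θ)) (-j) = (2 * Real.cos θ - 2) ^ j := by
  simpa using fwdDiff_iter_two_mul_cos_mul_add θ 0 (-j) j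

section Calculus

variable {E F : Type*} [NormedAddCommGroup E] [NormedSpace ℝ E] [NormedAddCommGroup F]
  [NormedSpace ℝ F]

theorem hasDerivAt_iteratedFDeriv_smul_apply {f : E → F} {n : ℕ} {x : E} {t : ℝ}
    (hf : DifferentiableAt ℝ (iteratedFDeriv ℝ n f) (t • x)) :
    HasDerivAt (fun s : ℝ => iteratedFDeriv ℝ n f (s • x) fun _ => x)
      (iteratedFDeriv ℝ (n + 1) f (t • x) fun _ => x) t :=
  (ContinuousMultilinearMap.apply ℝ (fun _ : Fin n => E) F fun _ => x).hasFDerivAt.comp_hasDerivAt t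
    (hf.hasFDerivAt.comp_hasDerivAt t (by simpa using (hasDerivAt_id t).smul_const x))

theorem abs_fwdDiff_iter_comp_smul_le {f : E → ℝ} {n : ℕ} {x : E} {a M : ℝ}
    (hf : ∀ t ∈ Icc a (a + n), ContDiffAt ℝ n f (t • x))
    (hM : ∀ t ∈ Icc a (a + n), ‖iteratedFDeriv ℝ n f (t • x)‖ ≤ M) :
    |Δ_[1] ^[n] (fun t => f (t • x)) a| ≤ M * ‖x‖ ^ n := by
  have h0 : (fun t : ℝ => f (t • x)) = fun t => iteratedFDeriv ℝ 0 f (t • x) fun _ => x := by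
    simp
  rw [h0]
  refine abs_fwdDiff_iter_le_of_hasDerivAt (F := fun m t => iteratedFDeriv ℝ m f (t • x) fun _ => x)
    (fun m hm t ht => hasDerivAt_iteratedFDeriv_smul_apply
      ((hf t ht).differentiableAt_iteratedFDeriv (by exact_mod_cast hm))) (fun t ht => ?_)
  rw [← Real.norm_eq_abs]
  exact ((iteratedFDeriv ℝ n f (t • x)).le_opNorm_mul_pow_of_le (b := ‖x‖)
    (pi_norm_le_iff_of_nonneg (norm_nonneg x) |>.2 fun _ => le_rfl)).trans
    (mul_le_mul_of_nonneg_right (hM t ht) (by positivity))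

theorem ContDiffAt.exists_eventually_norm_iteratedFDeriv_le {f : E → F} {N : ℕ} {x : E}
    (hf : ContDiffAt ℝ N f x) :
    ∃ M, ∀ᶠ y in nhds x, ∀ n ≤ N, ‖iteratedFDeriv ℝ n f y‖ ≤ M := by
  set g := fun y => ∑ n ∈ range (N + 1), ‖iteratedFDeriv ℝ n f y‖
  have hg : ContinuousAt g x := by
    refine tendsto_finsetSum _ fun n hn => ?_
    have hnN : n ≤ N := Nat.lt_succ_iff.1 (mem_range.1 hn)
    exact (hf.continuousAt_iteratedFDeriv (by exact_mod_cast hnN)).norm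
  refine ⟨g x + 1, (hg.eventually (gt_mem_nhds (lt_add_one (g x)))).mono fun y hy n hn => ?_⟩
  refine le_trans ?_ hy.le
  exact single_le_sum (f := fun n => ‖iteratedFDeriv ℝ n f y‖) (fun _ _ => norm_nonneg _)
    (mem_range.2 (Nat.lt_succ_of_le hn))

end Calculus

theorem abs_integral_sub_integral_pow_le {Ω : Type*} [MeasurableSpace Ω] {μ : Measure Ω}
    {A : Ω → ℝ} {k : ℕ} {M ε : ℝ} (hε : 0 ≤ ε)
    (hA : ∀ j ≤ k, Integrable (fun ω => A ω ^ j) μ)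
    (hM : ∀ j ≤ k, |∫ ω, A ω ^ j ∂μ| ≤ M * ε ^ j) :
    |∫ ω, (A ω - ∫ ω', A ω' ∂μ) ^ k ∂μ| ≤ M * (M + 1) ^ k * ε ^ k := by
  rcases Nat.eq_zero_or_pos k with rfl | hk
  · simpa using hM 0 le_rfl
  set m := ∫ ω', A ω' ∂μ
  have hM0 : 0 ≤ M := by simpa using (abs_nonneg _).trans (hM 0 (Nat.zero_le k))
  have hm : |m| ≤ M * ε := by simpa using hM 1 hk
  have hexpand : ∫ ω, (A ω - m) ^ k ∂μ
      = ∑ j ∈ range (k + 1), (-m) ^ j * k.choose j * ∫ ω, A ω ^ (k - j) ∂μ := by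
    simp_rw [sub_eq_neg_add, add_pow]
    rw [integral_finsetSum _ fun j _ =>
      ((hA (k - j) (Nat.sub_le k j)).const_mul ((-m) ^ j)).mul_const _]
    refine sum_congr rfl fun j _ => ?_
    rw [integral_mul_const, integral_const_mul]
    ring
  have hbinom : (M + 1) ^ k = ∑ j ∈ range (k + 1), M ^ j * k.choose j := by
    simp [add_pow]
  rw [hexpand, hbinom, mul_sum, sum_mul]
  refine (abs_sum_le_sum_abs _ _).trans (sum_le_sum fun j hj => ?_)
  have hjk : j ≤ k := Nat.lt_succ_iff.1 (mem_range.1 hj)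
  rw [abs_mul, abs_mul, abs_pow, abs_neg, Nat.abs_cast]
  calc |m| ^ j * k.choose j * |∫ ω, A ω ^ (k - j) ∂μ|
      ≤ (M * ε) ^ j * k.choose j * (M * ε ^ (k - j)) := by
        gcongr
        exact hM (k - j) (Nat.sub_le k j)
    _ = M * (M ^ j * k.choose j) * ε ^ k := by
        rw [← pow_mul_pow_sub ε hjk]
        ring

section Bochner

variable {E : Type*} [NormedAddCommGroup E] [InnerProductSpace ℝ E] [MeasurableSpace E]
  [OpensMeasurableSpace E] {μ : Measure E}

theorem integrable_cos_mul_inner [IsFiniteMeasure μ] (x : E) (c : ℝ) :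
    Integrable (fun w => Real.cos (c * inner ℝ w x)) μ :=
  .of_bound (by fun_prop) 1 (.of_forall fun w => by simpa using Real.abs_cos_le_one _)

theorem integrable_cos_inner_sub_one_pow [IsFiniteMeasure μ] (x : E) (j : ℕ) :
    Integrable (fun w => (Real.cos (inner ℝ w x) - 1) ^ j) μ := by
  refine .of_bound (by fun_prop) (2 ^ j) (.of_forall fun w => ?_)
  rw [norm_pow]
  gcongr
  rw [Real.norm_eq_abs, abs_le]
  constructor <;> linarith [Real.neg_one_le_cos (inner ℝ w x), Real.cos_le_one (inner ℝ w x)]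

theorem two_pow_mul_integral_cos_inner_sub_one_pow [IsFiniteMeasure μ] {K : E → ℝ}
    (hK : ∀ x, K x = ∫ w, Real.cos (inner ℝ w x) ∂μ) (x : E) (j : ℕ) :
    2 ^ j * ∫ w, (Real.cos (inner ℝ w x) - 1) ^ j ∂μ
      = Δ_[1] ^[2 * j] (fun t : ℝ => K (t • x)) (-j) := by
  have hK' : (fun t : ℝ => K (t • x)) = fun t => ∫ w, Real.cos (t * inner ℝ w x) ∂μ := by
    simp_rw [hK, inner_smul_right]
  rw [hK', fwdDiff_iter_integral, ← integral_const_mul]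
  · simp_rw [fwdDiff_iter_cos_mul, ← mul_pow, mul_sub, mul_one]
  exact integrable_cos_mul_inner x

theorem exists_abs_integral_cos_inner_sub_pow_le [IsProbabilityMeasure μ] {K : E → ℝ}
    (hK : ∀ x, K x = ∫ w, Real.cos (inner ℝ w x) ∂μ) {k : ℕ}
    (hsmooth : ContDiffAt ℝ (2 * k : ℕ) K 0) :
    ∃ C > (0 : ℝ), ∃ η > (0 : ℝ), ∀ x : E, ‖x‖ ≤ η →
      |∫ w, (Real.cos (inner ℝ w x) - K x) ^ k ∂μ| ≤ C * ‖x‖ ^ (2 * k) := by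
  obtain ⟨M₀, hM₀⟩ := hsmooth.exists_eventually_norm_iteratedFDeriv_le
  obtain ⟨ρ, hρ, hnear⟩ := Metric.nhds_basis_closedBall.eventually_iff.1
    ((hsmooth.eventually (ENat.natCast_ne_coe_top _)).and hM₀)
  set M := max M₀ 1
  refine ⟨M * (M + 1) ^ k, by positivity, ρ / (k + 1), by positivity, fun x hx => ?_⟩
  have hball : ∀ j ≤ k, ∀ t ∈ Icc (-j : ℝ) (-j + (2 * j : ℕ)), t • x ∈ Metric.closedBall 0 ρ := by
    intro j hj t ht
    have hjk : (j : ℝ) ≤ k := by exact_mod_cast hj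
    have htk : |t| ≤ k := abs_le.2 ⟨by linarith [ht.1], by push_cast at ht; linarith [ht.2]⟩
    rw [mem_closedBall_zero_iff, norm_smul, Real.norm_eq_abs]
    calc |t| * ‖x‖ ≤ k * (ρ / (k + 1)) := by gcongr
      _ ≤ ρ := by
        rw [← mul_div_assoc, div_le_iff₀ (by positivity)]
        linarith
  have hmoment : ∀ j ≤ k, |∫ w, (Real.cos (inner ℝ w x) - 1) ^ j ∂μ| ≤ M * (‖x‖ ^ 2) ^ j := by
    intro j hj
    calc |∫ w, (Real.cos (inner ℝ w x) - 1) ^ j ∂μ|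
        ≤ |2 ^ j * ∫ w, (Real.cos (inner ℝ w x) - 1) ^ j ∂μ| := by
          rw [abs_mul, abs_of_pos (by positivity : (0 : ℝ) < 2 ^ j)]
          exact le_mul_of_one_le_left (abs_nonneg _) (one_le_pow₀ one_le_two)
      _ ≤ M * ‖x‖ ^ (2 * j) := by
          rw [two_pow_mul_integral_cos_inner_sub_one_pow hK]
          exact abs_fwdDiff_iter_comp_smul_le
            (fun t ht => (hnear (hball j hj t ht)).1.of_le (by exact_mod_cast by omega))
            (fun t ht => ((hnear (hball j hj t ht)).2 _ (by omega)).trans (le_max_left _ _))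
      _ = M * (‖x‖ ^ 2) ^ j := by rw [pow_mul]
  have hmean : ∫ w, (Real.cos (inner ℝ w x) - 1) ∂μ = K x - 1 := by
    rw [integral_sub (by simpa using integrable_cos_mul_inner x 1) (integrable_const 1), ← hK]
    simp
  have key := abs_integral_sub_integral_pow_le (sq_nonneg ‖x‖)
    (fun j _ => integrable_cos_inner_sub_one_pow x j) hmoment
  simpa only [pow_one, hmean, sub_sub_sub_cancel_right, ← pow_mul] using key

end Bochner

theorem norm_le_l1 {d : ℕ} (x : EuclideanSpace ℝ (Fin d)) : ‖x‖ ≤ l1 x := by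
  rw [EuclideanSpace.norm_eq, l1, Real.sqrt_le_left (sum_nonneg fun i _ => abs_nonneg _)]
  simpa only [Real.norm_eq_abs, sq_abs] using
    sum_sq_le_sq_sum_of_nonneg (s := univ) (f := fun i => |x i|)
      fun i _ => abs_nonneg _

theorem rff_moment_vanishing_order_general {d : ℕ}
    (K : EuclideanSpace ℝ (Fin d) → ℝ)
    (μp : Measure (EuclideanSpace ℝ (Fin d))) [IsProbabilityMeasure μp]
    (hBochner : ∀ x, K x = ∫ w, Real.cos (inner ℝ w x : ℝ) ∂μp)
    (r : ℝ) (hr : 0 < r) (hAnalytic : ∀ x, l1 x < r → AnalyticAt ℝ K x)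
    (k : ℕ) :
    ∃ C > (0:ℝ), ∃ η > (0:ℝ), ∀ x : EuclideanSpace ℝ (Fin d), l1 x ≤ η →
      |∫ w, (Real.cos (inner ℝ w x : ℝ) - K x) ^ k ∂μp| ≤ C * (l1 x) ^ (2 * k) := by
  have hsmooth : ContDiffAt ℝ (2 * k : ℕ) K 0 :=
    (hAnalytic 0 (by simpa [l1] using hr)).contDiffAt
  obtain ⟨C, hC, η, hη, hbound⟩ := exists_abs_integral_cos_inner_sub_pow_le hBochner hsmooth
  refine ⟨C, hC, η, hη, fun x hx => ?_⟩
  have hnorm : ‖x‖ ≤ l1 x := norm_le_l1 x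
  exact (hbound x (hnorm.trans hx)).trans (by gcongr)

/-- for `K` analytic on the ℓ₁-ball of radius `r` admitting a Bochner
representation with law `μp`, for every `k` the moment `E[(cos⟨ω,x⟩ - K(x))^k]` vanishes to
order at least `2k` at the origin: `|E[X(x)^k]| ≤ C ‖x‖₁^{2k}` for `‖x‖₁ ≤ η`. -/
theorem rff_moment_vanishing_order {d : ℕ}
    (K : EuclideanSpace ℝ (Fin d) → ℝ) (hK0 : K 0 = 1)
    (μp : Measure (EuclideanSpace ℝ (Fin d))) [IsProbabilityMeasure μp]
    (hBochner : ∀ x, K x = ∫ w, Real.cos (inner ℝ w x : ℝ) ∂μp)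
    (r : ℝ) (hr : 0 < r) (hAnalytic : ∀ x, l1 x < r → AnalyticAt ℝ K x)
    (k : ℕ) :
    ∃ C > (0:ℝ), ∃ η > (0:ℝ), ∀ x : EuclideanSpace ℝ (Fin d), l1 x ≤ η →
      |∫ w, (Real.cos (inner ℝ w x : ℝ) - K x) ^ k ∂μp| ≤ C * (l1 x) ^ (2 * k) :=
  rff_moment_vanishing_order_general K μp hBochner r hr hAnalytic k
end
end

section
/- For all integers k, l, s with 0 ≤ l ≤ k, 0 ≤ s, and s < 2(k − l), the following sum vanishes: Σ_{i=0}^{k} C(k,i) · C(i,l) · (−1/2)^{k−i} · Σ_{j=0}^{k−i} C(k−i,j) · (2j − k + i)^s = 0, where C(·,·) denotes binomial coefficients and 0^0 is interpreted as 1. -/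
/-!
With `θ = X · d/dX − k`, which multiplies `X ^ w` by `w − k`, the sum is the value at `1` of
`θ ^ s` applied to `P = ∑ᵢ C(k,i) C(i,l) (−1/2)^(k−i) X^i (X² + 1)^(k−i)`. Twice the binomial
theorem gives `P = C(k,l) (−1/2)^(k−l) X^l (X − 1)^(2(k−l))`, and each application of `θ` lowers
the order of vanishing at `1` by at most one, so `θ ^ s P` still vanishes at `1` when
`s < 2(k − l)`.
-/

open Polynomial Finset

namespace Polynomial

variable {R : Type*} [CommRing R]

noncomputable def eulerOperator (c : R) : Module.End R R[X] :=
  LinearMap.mulLeft R X ∘ₗ derivative - c • LinearMap.id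

theorem eulerOperator_apply (c : R) (p : R[X]) :
    eulerOperator c p = X * derivative p - C c * p := by
  simp [eulerOperator, smul_eq_C_mul]

theorem eulerOperator_C_mul_X_pow (c a : R) (w : ℕ) :
    eulerOperator c (C a * X ^ w) = C ((w - c) * a) * X ^ w := by
  rw [eulerOperator_apply, derivative_C_mul_X_pow]
  cases w with
  | zero => simp
  | succ w =>
    simp only [Nat.add_sub_cancel, C_mul, map_sub, map_natCast, pow_succ]
    push_cast
    ring

theorem eulerOperator_pow_C_mul_X_pow (c a : R) (w s : ℕ) :
    (eulerOperator c ^ s) (C a * X ^ w) = C ((w - c) ^ s * a) * X ^ w := by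
  induction s with
  | zero => simp
  | succ s ih =>
    rw [pow_succ', Module.End.mul_apply, ih, eulerOperator_C_mul_X_pow, pow_succ', mul_assoc]

theorem pow_sub_one_dvd_eulerOperator_of_pow_dvd {p q : R[X]} {n : ℕ} (c : R) (h : q ^ n ∣ p) :
    q ^ (n - 1) ∣ eulerOperator c p := by
  rw [eulerOperator_apply]
  exact ((pow_sub_one_dvd_derivative_of_pow_dvd h).mul_left _).sub
    (((pow_dvd_pow q (n.sub_le 1)).trans h).mul_left _)

theorem pow_sub_dvd_eulerOperator_pow_of_pow_dvd {p q : R[X]} {n : ℕ} (c : R) (s : ℕ)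
    (h : q ^ n ∣ p) : q ^ (n - s) ∣ (eulerOperator c ^ s) p := by
  induction s with
  | zero => simpa
  | succ s ih =>
    rw [pow_succ', Module.End.mul_apply, ← Nat.sub_sub]
    exact pow_sub_one_dvd_eulerOperator_of_pow_dvd c ih

theorem eval_eulerOperator_pow_eq_zero_of_pow_dvd {p : R[X]} {a : R} {n s : ℕ} (c : R)
    (hs : s < n) (h : (X - C a) ^ n ∣ p) : eval a ((eulerOperator c ^ s) p) = 0 := by
  rw [← IsRoot.def, ← dvd_iff_isRoot]
  exact (dvd_pow_self _ (by omega)).trans (pow_sub_dvd_eulerOperator_pow_of_pow_dvd c s h)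

end Polynomial

theorem sum_range_choose_mul_choose_mul_pow_mul_pow {R : Type*} [CommSemiring R] (x y : R)
    (k l : ℕ) :
    ∑ i ∈ range (k + 1), (k.choose i * i.choose l : R) * x ^ i * y ^ (k - i) =
      k.choose l * x ^ l * (x + y) ^ (k - l) := by
  rcases lt_or_ge k l with hkl | hlk
  · rw [Nat.choose_eq_zero_of_lt hkl, Nat.cast_zero, zero_mul, zero_mul]
    refine sum_eq_zero fun i hi => ?_
    rw [Nat.choose_eq_zero_of_lt (n := i) (by grind), Nat.cast_zero, mul_zero, zero_mul, zero_mul]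
  obtain ⟨n, rfl⟩ := Nat.exists_eq_add_of_le hlk
  have hchoose (m : ℕ) :
      (l + n).choose (l + m) * (l + m).choose l = (l + n).choose l * n.choose m := by
    rw [Nat.choose_mul (Nat.le_add_right l m), Nat.add_sub_cancel_left, Nat.add_sub_cancel_left]
  rw [add_assoc, sum_range_add, Nat.add_sub_cancel_left, add_pow, mul_sum]
  rw [sum_eq_zero fun i hi => by rw [Nat.choose_eq_zero_of_lt (mem_range.1 hi)]; simp, zero_add]
  refine sum_congr rfl fun m _ => ?_
  rw [← Nat.cast_mul, hchoose, Nat.add_sub_add_left]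
  push_cast
  ring

theorem X_add_C_neg_half_mul_sq_add_one :
    (X : ℝ[X]) + C (-1 / 2) * (X ^ 2 + 1) = C (-1 / 2) * (X - C 1) ^ 2 := by
  have h : C (-1 / 2 : ℝ) * 2 = -1 := by rw [← C_ofNat, ← C_mul]; norm_num
  rw [C_1]
  linear_combination (X : ℝ[X]) * h

noncomputable def binomialDifferencePolynomial (k l : ℕ) : ℝ[X] :=
  ∑ i ∈ range (k + 1), ∑ j ∈ range (k - i + 1),
    C ((k.choose i : ℝ) * i.choose l * (-1 / 2) ^ (k - i) * (k - i).choose j) * X ^ (i + 2 * j)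

theorem binomialDifferencePolynomial_eq (k l : ℕ) :
    binomialDifferencePolynomial k l =
      C ((k.choose l : ℝ) * (-1 / 2) ^ (k - l)) * X ^ l * (X - C 1) ^ (2 * (k - l)) := by
  have hrow (i : ℕ) : ∑ j ∈ range (k - i + 1),
      C ((k.choose i : ℝ) * i.choose l * (-1 / 2) ^ (k - i) * (k - i).choose j) * X ^ (i + 2 * j) =
      (k.choose i * i.choose l : ℝ[X]) * X ^ i * (C (-1 / 2) * (X ^ 2 + 1)) ^ (k - i) := by
    rw [mul_pow, add_pow, mul_sum, mul_sum]
    refine sum_congr rfl fun j _ => ?_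
    simp only [C_mul, map_pow, map_natCast, one_pow, mul_one, pow_add, pow_mul]
    ring
  rw [binomialDifferencePolynomial, sum_congr rfl fun i _ => hrow i,
    sum_range_choose_mul_choose_mul_pow_mul_pow, X_add_C_neg_half_mul_sq_add_one, mul_pow,
    ← pow_mul, map_mul, map_pow, map_natCast]
  ring

theorem eval_one_eulerOperator_pow_binomialDifferencePolynomial (k l s : ℕ) :
    eval 1 ((eulerOperator (k : ℝ) ^ s) (binomialDifferencePolynomial k l)) =
      ∑ i ∈ range (k + 1), (k.choose i : ℝ) * i.choose l * (-1 / 2) ^ (k - i) *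
        ∑ j ∈ range (k - i + 1), ((k - i).choose j : ℝ) * (2 * (j : ℝ) - k + i) ^ s := by
  simp only [binomialDifferencePolynomial, map_sum, eulerOperator_pow_C_mul_X_pow, eval_finsetSum,
    eval_mul, eval_C, eval_pow, eval_X, one_pow, mul_one, mul_sum]
  refine sum_congr rfl fun i _ => sum_congr rfl fun j _ => ?_
  push_cast
  ring

theorem binomial_difference_identity_general (k l s : ℕ) (hs : s < 2 * (k - l)) :
    ∑ i ∈ Finset.range (k+1), (k.choose i : ℝ) * (i.choose l : ℝ) * (-1/2 : ℝ)^(k-i) *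
      ∑ j ∈ Finset.range (k-i+1), ((k-i).choose j : ℝ) * (2*(j:ℝ) - (k:ℝ) + (i:ℝ))^s = 0 := by
  rw [← eval_one_eulerOperator_pow_binomialDifferencePolynomial]
  refine eval_eulerOperator_pow_eq_zero_of_pow_dvd _ hs ?_
  rw [binomialDifferencePolynomial_eq]
  exact dvd_mul_left _ _

/-- for integers `0 ≤ l ≤ k` and `0 ≤ s < 2(k - l)`,
`Σ_{i=0}^{k} C(k,i) C(i,l) (-1/2)^{k-i} Σ_{j=0}^{k-i} C(k-i,j) (2j-k+i)^s = 0`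
(with the convention `0^0 = 1`, which is the default for natural-number powers in ℝ). -/
theorem binomial_difference_identity (k l s : ℕ) (hlk : l ≤ k) (hs : s < 2 * (k - l)) :
    ∑ i ∈ Finset.range (k+1), (k.choose i : ℝ) * (i.choose l : ℝ) * (-1/2 : ℝ)^(k-i) *
      ∑ j ∈ Finset.range (k-i+1), ((k-i).choose j : ℝ) * (2*(j:ℝ) - (k:ℝ) + (i:ℝ))^s = 0 :=
  binomial_difference_identity_general k l s hs
end
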